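/- Let π ∈ Π_S(μ, ν) with μ, ν ∈ P₁(ℝ) and let M ∈ Π(ν, ρ) be any coupling. Define π^k by composing π with M on the second coordinate. Then AW₁(π', π) ≤ ∫_{ℝ²} |z − y| M(dz, dy). -/

import Mathlib

open MeasureTheory ProbabilityTheory Filter

noncomputable section

/-- The set of couplings of two measures on `ℝ`. -/
def Couplings (μ ν : Measure ℝ) : Set (Measure (ℝ × ℝ)) :=
  {π | π.map Prod.fst = μ ∧ π.map Prod.snd = ν}

/-- Wasserstein-1 distance, defined via couplings. -/
def W1 (μ ν : Measure ℝ) : ℝ :=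
  sInf ((fun π : Measure (ℝ × ℝ) => ∫ p, |p.1 - p.2| ∂π) '' Couplings μ ν)

/-- The put function `P_η(x) = ∫ (x - t)⁺ η(dt)`. -/
def put (η : Measure ℝ) (x : ℝ) : ℝ := ∫ t, max (x - t) 0 ∂η

/-- Adapted Wasserstein-1 distance between two couplings given by their first
marginals and disintegration kernels. -/
def AW1 (μ : Measure ℝ) (κ : Kernel ℝ ℝ) (μ' : Measure ℝ) (κ' : Kernel ℝ ℝ) : ℝ :=
  sInf ((fun γ : Measure (ℝ × ℝ) =>
    ∫ p, (|p.1 - p.2| + W1 (κ p.1) (κ' p.2)) ∂γ) '' Couplings μ μ')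

/-! Couple `μ` with itself along the diagonal, so that `AW1 μ κ' μ κ ≤ ∫ W1 (κ' x) (κ x) dμ`.
Since `κ' x` is `κ x` pushed through `lam`, the measure `κ x ⊗ₘ lam`, with coordinates swapped,
couples `κ' x` with `κ x`, whence `W1 (κ' x) (κ x) ≤ ∫∫ |z - y| lam z (dy) κ x (dz)`.
Integrating over `μ` and using `κ ∘ₘ μ = ν` gives the bound. -/
lemma W1_nonneg (a b : Measure ℝ) : 0 ≤ W1 a b :=
  Real.sInf_nonneg <| by
    rintro _ ⟨π, -, rfl⟩
    exact integral_nonneg fun _ => abs_nonneg _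

lemma W1_le_integral {a b : Measure ℝ} {π : Measure (ℝ × ℝ)} (hπ : π ∈ Couplings a b) :
    W1 a b ≤ ∫ p, |p.1 - p.2| ∂π := by
  refine csInf_le ⟨0, ?_⟩ ⟨π, hπ, rfl⟩
  rintro _ ⟨π', -, rfl⟩
  exact integral_nonneg fun _ => abs_nonneg _

lemma AW1_le_integral {μ μ' : Measure ℝ} {κ κ' : Kernel ℝ ℝ} {γ : Measure (ℝ × ℝ)}
    (hγ : γ ∈ Couplings μ μ') :
    AW1 μ κ μ' κ' ≤ ∫ p, (|p.1 - p.2| + W1 (κ p.1) (κ' p.2)) ∂γ := by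
  refine csInf_le ⟨0, ?_⟩ ⟨γ, hγ, rfl⟩
  rintro _ ⟨γ', -, rfl⟩
  exact integral_nonneg fun _ => add_nonneg (abs_nonneg _) (W1_nonneg _ _)

lemma map_diag_mem_couplings (μ : Measure ℝ) : μ.map (fun x => (x, x)) ∈ Couplings μ μ := by
  have h : Measurable fun x : ℝ => (x, x) := measurable_id.prodMk measurable_id
  refine ⟨?_, ?_⟩
  · rw [Measure.map_map measurable_fst h]; exact Measure.map_id
  · rw [Measure.map_map measurable_snd h]; exact Measure.map_id

lemma AW1_self_le_integral_W1 (μ : Measure ℝ) (κ κ' : Kernel ℝ ℝ) :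
    AW1 μ κ μ κ' ≤ ∫ x, W1 (κ x) (κ' x) ∂μ := by
  have hdiag : MeasurableEmbedding fun x : ℝ => (x, x) :=
    (measurable_id.prodMk measurable_id).measurableEmbedding fun _ _ h => congrArg Prod.fst h
  calc AW1 μ κ μ κ' ≤ ∫ p, (|p.1 - p.2| + W1 (κ p.1) (κ' p.2)) ∂(μ.map fun x => (x, x)) :=
        AW1_le_integral (map_diag_mem_couplings μ)
    _ = ∫ x, W1 (κ x) (κ' x) ∂μ := by simp [hdiag.integral_map]

lemma map_swap_compProd_mem_couplings (η : Measure ℝ) [SFinite η] (lam : Kernel ℝ ℝ)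
    [IsMarkovKernel lam] : (η ⊗ₘ lam).map Prod.swap ∈ Couplings (lam ∘ₘ η) η :=
  ⟨by simpa [Measure.fst] using Measure.fst_map_swap (ρ := η ⊗ₘ lam),
    by simpa [Measure.snd] using Measure.snd_map_swap (ρ := η ⊗ₘ lam)⟩

lemma W1_comp_le (η : Measure ℝ) [SFinite η] (lam : Kernel ℝ ℝ) [IsMarkovKernel lam] :
    W1 (lam ∘ₘ η) η ≤ ∫ z, ∫ y, |z - y| ∂lam z ∂η := by
  refine (W1_le_integral (map_swap_compProd_mem_couplings η lam)).trans ?_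
  rw [integral_map measurable_swap.aemeasurable (by fun_prop)]
  simp only [Prod.fst_swap, Prod.snd_swap, abs_sub_comm _ (Prod.fst _)]
  by_cases hf : Integrable (fun p : ℝ × ℝ => |p.1 - p.2|) (η ⊗ₘ lam)
  · exact (Measure.integral_compProd hf).le
  · rw [integral_undef hf]
    exact integral_nonneg fun _ => integral_nonneg fun _ => abs_nonneg _

lemma MeasureTheory.Measure.integral_comp {α β E : Type*} [MeasurableSpace α]
    [MeasurableSpace β] [NormedAddCommGroup E] [NormedSpace ℝ E] {μ : Measure α}
    {κ : Kernel α β} {f : β → E} (hf : Integrable f (κ ∘ₘ μ)) :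
    ∫ y, f y ∂(κ ∘ₘ μ) = ∫ x, ∫ y, f y ∂κ x ∂μ := by
  rw [Measure.comp_eq_comp_const_apply] at hf ⊢
  rw [Kernel.integral_comp hf]
  simp

lemma MeasureTheory.Measure.integrable_integral_of_integrable_comp {α β E : Type*}
    [MeasurableSpace α] [MeasurableSpace β] [NormedAddCommGroup E] [NormedSpace ℝ E]
    {μ : Measure α} {κ : Kernel α β} {f : β → E} (hf : Integrable f (κ ∘ₘ μ)) :
    Integrable (fun x => ∫ y, f y ∂κ x) μ := by
  rw [Measure.comp_eq_comp_const_apply] at hf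
  simpa using hf.integral_comp

lemma integrable_abs_sub_compProd {ν : Measure ℝ} [SFinite ν] {lam : Kernel ℝ ℝ}
    [IsMarkovKernel lam] (hν : Integrable (fun x : ℝ => x) ν)
    (hρ : Integrable (fun x : ℝ => x) (lam ∘ₘ ν)) :
    Integrable (fun p : ℝ × ℝ => |p.1 - p.2|) (ν ⊗ₘ lam) := by
  have hfst : Integrable (fun p : ℝ × ℝ => p.1) (ν ⊗ₘ lam) := by
    rw [← Measure.fst_compProd ν lam, Measure.fst] at hν
    exact (integrable_map_measure (by fun_prop) measurable_fst.aemeasurable).mp hν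
  have hsnd : Integrable (fun p : ℝ × ℝ => p.2) (ν ⊗ₘ lam) :=
    (Measure.integrable_compProd_snd_iff (by fun_prop)).mpr hρ
  exact (hfst.sub hsnd).abs

lemma integrable_integral_abs_sub {ν : Measure ℝ} [SFinite ν] {lam : Kernel ℝ ℝ}
    [IsMarkovKernel lam] (hν : Integrable (fun x : ℝ => x) ν)
    (hρ : Integrable (fun x : ℝ => x) (lam ∘ₘ ν)) :
    Integrable (fun z => ∫ y, |z - y| ∂lam z) ν := by
  simpa using (integrable_abs_sub_compProd hν hρ).integral_norm_compProd

theorem AW1_composition_bound_general (μ ν ρ : Measure ℝ)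
    [IsProbabilityMeasure ν]
    (hν : Integrable (fun x : ℝ => x) ν)
    (hρ : Integrable (fun x : ℝ => x) ρ)
    (κ lam κ' : Kernel ℝ ℝ) [IsMarkovKernel κ] [IsMarkovKernel lam]
    (hκν : μ.bind (fun x => κ x) = ν)
    (hlamρ : ν.bind (fun z => lam z) = ρ)
    (hκ' : ∀ x : ℝ, κ' x = (κ x).bind (fun z => lam z)) :
    AW1 μ κ' μ κ ≤ ∫ z, ∫ y, |z - y| ∂(lam z) ∂ν := by
  have hcomp : κ ∘ₘ μ = ν := hκν
  have hcost : Integrable (fun z => ∫ y, |z - y| ∂lam z) (κ ∘ₘ μ) :=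
    hcomp ▸ integrable_integral_abs_sub hν (hlamρ ▸ hρ)
  calc AW1 μ κ' μ κ ≤ ∫ x, W1 (κ' x) (κ x) ∂μ := AW1_self_le_integral_W1 μ κ' κ
    _ ≤ ∫ x, ∫ z, ∫ y, |z - y| ∂lam z ∂κ x ∂μ := by
      refine integral_mono_of_nonneg (ae_of_all _ fun _ => W1_nonneg _ _)
        (Measure.integrable_integral_of_integrable_comp hcost) (ae_of_all _ fun x => ?_)
      dsimp only
      rw [hκ' x]
      exact W1_comp_le (κ x) lam
    _ = ∫ z, ∫ y, |z - y| ∂lam z ∂ν := by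
      rw [← Measure.integral_comp hcost, hcomp]

theorem AW1_composition_bound (μ ν ρ : Measure ℝ)
    [IsProbabilityMeasure μ] [IsProbabilityMeasure ν] [IsProbabilityMeasure ρ]
    (hμ : Integrable (fun x : ℝ => x) μ) (hν : Integrable (fun x : ℝ => x) ν)
    (hρ : Integrable (fun x : ℝ => x) ρ)
    (κ lam κ' : Kernel ℝ ℝ) [IsMarkovKernel κ] [IsMarkovKernel lam] [IsMarkovKernel κ']
    (hκν : μ.bind (fun x => κ x) = ν)
    (hsup : ∀ᵐ x ∂μ, ∫ y, y ∂(κ x) ≤ x)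
    (hlamρ : ν.bind (fun z => lam z) = ρ)
    (hκ' : ∀ x : ℝ, κ' x = (κ x).bind (fun z => lam z)) :
    AW1 μ κ' μ κ ≤ ∫ z, ∫ y, |z - y| ∂(lam z) ∂ν :=
  AW1_composition_bound_general μ ν ρ hν hρ κ lam κ' hκν hlamρ hκ'
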